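/- Let P = P_1 ⊗ ⋯ ⊗ P_n and Q = Q_1 ⊗ ⋯ ⊗ Q_n be product distributions on [q]^n with P ≠ Q, π the distribution of X conditioned on X ≠ Y under the coordinate-wise optimal independent coupling C, and f(ω) = max{0, P(ω) − Q(ω)}/Pr_C[X = ω ∧ X ≠ Y]. Then the estimator d̂ = (E_π f)·(1 − ∏_i (1 − d_TV(P_i,Q_i))) satisfies d̂ = d_TV(P, Q) exactly, i.e., the estimator is unbiased. -/
import Mathlib


/-- The estimator `d̂ = (E_π f) · (1 - ∏ i (1 - d_TV(P i, Q i)))`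
equals `d_TV(P, Q)` exactly (the estimator is unbiased). -/
theorem stmt_16 (n q : ℕ)
    (P Q : Fin n → Fin q → ℝ)
    (hP0 : ∀ i c, 0 ≤ P i c) (hP1 : ∀ i, ∑ c, P i c = 1)
    (hQ0 : ∀ i c, 0 ≤ Q i c) (hQ1 : ∀ i, ∑ c, Q i c = 1)
    (hPQ : (fun ω : Fin n → Fin q => ∏ i, P i (ω i))
        ≠ (fun ω : Fin n → Fin q => ∏ i, Q i (ω i)))
    (g : (Fin n → Fin q) → ℝ)
    (hg : ∀ ω, g ω = (∏ i, P i (ω i)) - ∏ i, min (P i (ω i)) (Q i (ω i)))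
    (Z : ℝ) (hZ : Z = 1 - ∏ i, (1 - (1/2) * ∑ c, |P i c - Q i c|))
    (π f : (Fin n → Fin q) → ℝ)
    (hπ : ∀ ω, π ω = g ω / Z)
    (hf : ∀ ω, f ω = max 0 ((∏ i, P i (ω i)) - ∏ i, Q i (ω i)) / g ω) :
    (∑ ω, π ω * f ω) * Z
      = (1/2) * ∑ ω : Fin n → Fin q, |(∏ i, P i (ω i)) - ∏ i, Q i (ω i)| := by
  -- each factor 1 - d_i lies in [0,1]
  have hd0 : ∀ i, 0 ≤ (1/2) * ∑ c, |P i c - Q i c| := by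
    intro i
    positivity
  have hd1 : ∀ i, (1/2) * ∑ c, |P i c - Q i c| ≤ 1 := by
    intro i
    have h1 : ∑ c, |P i c - Q i c| ≤ ∑ c, (P i c + Q i c) := by
      apply Finset.sum_le_sum
      intro c _
      have := abs_sub (P i c) (Q i c)
      rw [abs_sub_le_iff]
      constructor
      · nlinarith [hP0 i c, hQ0 i c]
      · nlinarith [hP0 i c, hQ0 i c]
    rw [Finset.sum_add_distrib, hP1 i, hQ1 i] at h1
    linarith
  -- Z ≠ 0
  have hZne : Z ≠ 0 := by
    intro h0
    rw [h0] at hZ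
    have hprod : ∏ i, (1 - (1/2) * ∑ c, |P i c - Q i c|) = 1 := by linarith
    have hdz : ∀ i : Fin n, (1/2) * ∑ c, |P i c - Q i c| = 0 := by
      intro i
      have hmem : i ∈ (Finset.univ : Finset (Fin n)) := Finset.mem_univ i
      rw [← Finset.prod_erase_mul _ _ hmem] at hprod
      have hrest0 : 0 ≤ ∏ j ∈ Finset.univ.erase i, (1 - (1/2) * ∑ c, |P j c - Q j c|) :=
        Finset.prod_nonneg fun j _ => by linarith [hd1 j]
      have hrest1 : ∏ j ∈ Finset.univ.erase i, (1 - (1/2) * ∑ c, |P j c - Q j c|) ≤ 1 :=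
        Finset.prod_le_one (fun j _ => by linarith [hd1 j]) (fun j _ => by linarith [hd0 j])
      nlinarith [hd0 i, hd1 i]
    apply hPQ
    funext ω
    have hPQi : ∀ i c, P i c = Q i c := by
      intro i c
      have hsum := hdz i
      have : ∀ c ∈ (Finset.univ : Finset (Fin q)), |P i c - Q i c| = 0 := by
        rw [← Finset.sum_eq_zero_iff_of_nonneg (fun c _ => abs_nonneg _)]
        linarith
      have := this c (Finset.mem_univ c)
      have := abs_eq_zero.mp this
      linarith
    exact Finset.prod_congr rfl fun i _ => hPQi i (ω i)
  -- termwise identity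
  have key : ∀ ω : Fin n → Fin q,
      π ω * f ω * Z = max 0 ((∏ i, P i (ω i)) - ∏ i, Q i (ω i)) := by
    intro ω
    have hgnn : 0 ≤ g ω := by
      rw [hg]
      have : ∏ i, min (P i (ω i)) (Q i (ω i)) ≤ ∏ i, P i (ω i) :=
        Finset.prod_le_prod (fun i _ => le_min (hP0 i (ω i)) (hQ0 i (ω i)))
          (fun i _ => min_le_left _ _)
      linarith
    have hmaxle : max 0 ((∏ i, P i (ω i)) - ∏ i, Q i (ω i)) ≤ g ω := by
      rw [hg]
      have : ∏ i, min (P i (ω i)) (Q i (ω i)) ≤ ∏ i, Q i (ω i) :=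
        Finset.prod_le_prod (fun i _ => le_min (hP0 i (ω i)) (hQ0 i (ω i)))
          (fun i _ => min_le_right _ _)
      rw [hg] at hgnn
      rw [max_le_iff]
      constructor <;> linarith
    rcases eq_or_ne (g ω) 0 with hgz | hgz
    · have hmax0 : max 0 ((∏ i, P i (ω i)) - ∏ i, Q i (ω i)) = 0 := by
        have := le_max_left 0 ((∏ i, P i (ω i)) - ∏ i, Q i (ω i))
        rw [hgz] at hmaxle
        linarith
      rw [hπ, hgz, hmax0]
      ring
    · rw [hπ, hf]
      field_simp
  rw [Finset.sum_mul]
  rw [Finset.sum_congr rfl fun ω _ => key ω]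
  -- sum of products of probabilities is 1
  have hPsum : ∑ ω : Fin n → Fin q, ∏ i, P i (ω i) = 1 := by
    rw [← Fintype.prod_sum]
    simp [hP1]
  have hQsum : ∑ ω : Fin n → Fin q, ∏ i, Q i (ω i) = 1 := by
    rw [← Fintype.prod_sum]
    simp [hQ1]
  have hdiff : ∑ ω : Fin n → Fin q, ((∏ i, P i (ω i)) - ∏ i, Q i (ω i)) = 0 := by
    rw [Finset.sum_sub_distrib, hPsum, hQsum]; ring
  have hmaxeq : ∀ x : ℝ, max 0 x = (x + |x|) / 2 := by
    intro x
    rcases le_or_gt 0 x with h | h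
    · rw [max_eq_right h, abs_of_nonneg h]; ring
    · rw [max_eq_left h.le, abs_of_neg h]; ring
  rw [Finset.sum_congr rfl fun ω _ => hmaxeq _]
  rw [← Finset.sum_div, Finset.sum_add_distrib, hdiff]
  ring
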